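/- Let H and H' be real normed vector spaces, let (Ω, 𝒫) be a probability space, let M : H → H' be a continuous linear map with operator norm ‖M‖ ≤ G, and let A and B be H-valued random vectors that are square-integrable about a common point μ ∈ H, with ∫ ‖A − μ‖² d𝒫 ≤ σ²/m and ∫ ‖B − μ‖² d𝒫 ≤ σ²/n for reals σ ≥ 0, G ≥ 0 and positive integers m, n. Then ∫ ‖M(A − B)‖ d𝒫 ≤ √2 · G · σ · √(1/m + 1/n). -/

import Mathlib

/-!
Pointwise, `‖M (A - B)‖ ≤ G (‖A - μ‖ + ‖B - μ‖)`. On a probability space Jensen's inequality for the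
concave square root bounds each `∫ ‖X - μ‖` by `√(∫ ‖X - μ‖²)`, and `√a + √b ≤ √2 · √(a + b)`
merges the two square roots.
-/

open MeasureTheory

namespace MeasureTheory

variable {Ω E : Type*} [MeasurableSpace Ω] [NormedAddCommGroup E] {P : Measure Ω} {X : Ω → E}

lemma Integrable.norm_of_norm_sq [IsFiniteMeasure P] (hX : Integrable (fun ω => ‖X ω‖ ^ 2) P) :
    Integrable (fun ω => ‖X ω‖) P := by
  -- `X` itself need not be measurable: measurability of `‖X‖` comes from `‖X‖ = √(‖X‖²)`.
  have hmeas : AEStronglyMeasurable (fun ω => ‖X ω‖) P := by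
    simpa only [Real.sqrt_sq (norm_nonneg _)] using
      Real.continuous_sqrt.comp_aestronglyMeasurable hX.aestronglyMeasurable
  exact ((memLp_two_iff_integrable_sq hmeas).2 hX).integrable one_le_two

lemma integral_norm_le_sqrt_integral_norm_sq [IsProbabilityMeasure P]
    (hX : Integrable (fun ω => ‖X ω‖ ^ 2) P) :
    ∫ ω, ‖X ω‖ ∂P ≤ √(∫ ω, ‖X ω‖ ^ 2 ∂P) := by
  have hjensen := Real.strictConcaveOn_sqrt.concaveOn.le_map_integral
    Real.continuous_sqrt.continuousOn isClosed_Ici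
    (ae_of_all P fun ω => sq_nonneg ‖X ω‖) hX
    (by simpa only [Function.comp_def, Real.sqrt_sq (norm_nonneg _)] using hX.norm_of_norm_sq)
  simpa only [Real.sqrt_sq (norm_nonneg _)] using hjensen

end MeasureTheory

lemma Real.sqrt_add_sqrt_le_sqrt_two_mul {a b : ℝ} (ha : 0 ≤ a) (hb : 0 ≤ b) :
    √a + √b ≤ √2 * √(a + b) := by
  rw [← Real.sqrt_mul zero_le_two]
  apply Real.le_sqrt_of_sq_le
  nlinarith [Real.sq_sqrt ha, Real.sq_sqrt hb, sq_nonneg (√a - √b)]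

lemma ContinuousLinearMap.norm_map_sub_le {H H' : Type*} [SeminormedAddCommGroup H]
    [NormedSpace ℝ H] [SeminormedAddCommGroup H'] [NormedSpace ℝ H'] (M : H →L[ℝ] H') {G : ℝ}
    (hM : ‖M‖ ≤ G) (a b μ : H) : ‖M (a - b)‖ ≤ G * (‖a - μ‖ + ‖b - μ‖) :=
  calc ‖M (a - b)‖ ≤ ‖M‖ * ‖(a - μ) - (b - μ)‖ := by
        rw [sub_sub_sub_cancel_right]; exact M.le_opNorm _
    _ ≤ G * (‖a - μ‖ + ‖b - μ‖) :=
        mul_le_mul hM (norm_sub_le _ _) (norm_nonneg _) ((norm_nonneg M).trans hM)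

theorem linear_map_two_estimator_deviation_general
    {H : Type*} [NormedAddCommGroup H] [NormedSpace ℝ H]
    {H' : Type*} [NormedAddCommGroup H'] [NormedSpace ℝ H']
    {Ω : Type*} [MeasurableSpace Ω] (P : Measure Ω) [IsProbabilityMeasure P]
    (M : H →L[ℝ] H') (G : ℝ) (hM : ‖M‖ ≤ G)
    (A B : Ω → H) (μ : H) (σ : ℝ) (m n : ℕ)
    (hσ : 0 ≤ σ)
    (hAsq : Integrable (fun ω => ‖A ω - μ‖ ^ 2) P)
    (hBsq : Integrable (fun ω => ‖B ω - μ‖ ^ 2) P)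
    (hAbound : ∫ ω, ‖A ω - μ‖ ^ 2 ∂P ≤ σ ^ 2 / m)
    (hBbound : ∫ ω, ‖B ω - μ‖ ^ 2 ∂P ≤ σ ^ 2 / n) :
    ∫ ω, ‖M (A ω - B ω)‖ ∂P ≤ Real.sqrt 2 * G * σ * Real.sqrt (1 / m + 1 / n) := by
  have hG : 0 ≤ G := (norm_nonneg M).trans hM
  have hAi := hAsq.norm_of_norm_sq
  have hBi := hBsq.norm_of_norm_sq
  have hσmn : √(σ ^ 2 / m + σ ^ 2 / n) = σ * √(1 / m + 1 / n) := by
    rw [← mul_one_div, ← mul_one_div _ (n : ℝ), ← mul_add, Real.sqrt_mul (sq_nonneg σ),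
      Real.sqrt_sq hσ]
  calc ∫ ω, ‖M (A ω - B ω)‖ ∂P ≤ ∫ ω, G * (‖A ω - μ‖ + ‖B ω - μ‖) ∂P :=
        integral_mono_of_nonneg (ae_of_all P fun _ => norm_nonneg _) ((hAi.add hBi).const_mul G)
          (ae_of_all P fun ω => M.norm_map_sub_le hM (A ω) (B ω) μ)
    _ = G * (∫ ω, ‖A ω - μ‖ ∂P + ∫ ω, ‖B ω - μ‖ ∂P) := by
        rw [integral_const_mul, integral_add hAi hBi]
    _ ≤ G * (√(σ ^ 2 / m) + √(σ ^ 2 / n)) := by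
        gcongr
        · exact (integral_norm_le_sqrt_integral_norm_sq hAsq).trans (Real.sqrt_le_sqrt hAbound)
        · exact (integral_norm_le_sqrt_integral_norm_sq hBsq).trans (Real.sqrt_le_sqrt hBbound)
    _ ≤ G * (√2 * (σ * √(1 / m + 1 / n))) := by
        rw [← hσmn]
        gcongr
        exact Real.sqrt_add_sqrt_le_sqrt_two_mul (by positivity) (by positivity)
    _ = √2 * G * σ * √(1 / m + 1 / n) := by ring

/-- Deviation of two minibatch gradient estimates pushed through a bounded linear map:
if `M : H → H'` is continuous linear with `‖M‖ ≤ G`, and `A`, `B` are square-integrable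
about `μ` with `∫ ‖A − μ‖² ≤ σ²/m`, `∫ ‖B − μ‖² ≤ σ²/n`, then
`∫ ‖M(A − B)‖ ≤ √2 · G · σ · √(1/m + 1/n)`. -/
theorem linear_map_two_estimator_deviation
    {H : Type*} [NormedAddCommGroup H] [NormedSpace ℝ H]
    {H' : Type*} [NormedAddCommGroup H'] [NormedSpace ℝ H']
    {Ω : Type*} [MeasurableSpace Ω] (P : Measure Ω) [IsProbabilityMeasure P]
    (M : H →L[ℝ] H') (G : ℝ) (hM : ‖M‖ ≤ G)
    (A B : Ω → H) (μ : H) (σ : ℝ) (m n : ℕ)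
    (hm : 0 < m) (hn : 0 < n) (hσ : 0 ≤ σ) (hG : 0 ≤ G)
    (hAsq : Integrable (fun ω => ‖A ω - μ‖ ^ 2) P)
    (hBsq : Integrable (fun ω => ‖B ω - μ‖ ^ 2) P)
    (hAbound : ∫ ω, ‖A ω - μ‖ ^ 2 ∂P ≤ σ ^ 2 / m)
    (hBbound : ∫ ω, ‖B ω - μ‖ ^ 2 ∂P ≤ σ ^ 2 / n) :
    ∫ ω, ‖M (A ω - B ω)‖ ∂P ≤ Real.sqrt 2 * G * σ * Real.sqrt (1 / m + 1 / n) :=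
  linear_map_two_estimator_deviation_general P M G hM A B μ σ m n hσ hAsq hBsq hAbound hBbound
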